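/- arXiv:2108.11698 — 5 statements merged into one kernel-verified Lean document; each statement's English description precedes it below -/
import Mathlib

section
/- Let (X, d) be a proper, uniquely geodesic, straight metric space and let b ∈ X. Then the evaluation map from D_b to the metric sphere S_b^1 = {x ∈ X : d(x, b) = 1}, sending a geodesic ray γ to γ(1), is a homeomorphism (where D_b carries the topology of uniform convergence on compact sets and S_b^1 the subspace topology). -/
open Filter Topology
open scoped NNReal ENNReal

variable {X : Type*} [MetricSpace X]

/-- `γ` restricted to the set `s ⊆ ℝ` is a (unit-speed) geodesic:
`dist (γ u) (γ v) = |u - v|` for all `u, v ∈ s`. -/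
def IsGeodesicOn (γ : ℝ → X) (s : Set ℝ) : Prop :=
  ∀ u ∈ s, ∀ v ∈ s, dist (γ u) (γ v) = |u - v|

/-- `X` is uniquely geodesic: any two distinct points are joined by a geodesic
parametrized on `[0, dist a c]`, and any two such geodesics agree on that interval. -/
def UniquelyGeodesic (X : Type*) [MetricSpace X] : Prop :=
  ∀ a c : X, a ≠ c →
    ∃ γ : ℝ → X,
      (IsGeodesicOn γ (Set.Icc 0 (dist a c)) ∧ γ 0 = a ∧ γ (dist a c) = c) ∧
        ∀ γ' : ℝ → X,
          (IsGeodesicOn γ' (Set.Icc 0 (dist a c)) ∧ γ' 0 = a ∧ γ' (dist a c) = c) →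
            Set.EqOn γ' γ (Set.Icc 0 (dist a c))

/-- `X` is straight: every geodesic defined on a nondegenerate closed interval extends to a
unique bi-infinite geodesic (an isometric embedding of `ℝ`). -/
def Straight (X : Type*) [MetricSpace X] : Prop :=
  ∀ (γ : ℝ → X) (a c : ℝ), a < c → IsGeodesicOn γ (Set.Icc a c) →
    ∃! γ' : ℝ → X, Isometry γ' ∧ Set.EqOn γ' γ (Set.Icc a c)

/-- The space `D_b` of geodesic rays based at `b`, as a subspace of `C(ℝ≥0, X)`
(with the compact-open topology, i.e. uniform convergence on compact sets). -/
abbrev GeodesicRay (X : Type*) [MetricSpace X] (b : X) :=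
  {γ : C(ℝ≥0, X) // Isometry ⇑γ ∧ γ 0 = b}

/-- The horofunction embedding `h : X → C(X, ℝ)`, `h x y = d(x, y) - d(x, b)`. -/
noncomputable def horo (b x : X) : C(X, ℝ) :=
  ⟨fun y => dist x y - dist x b,
    (continuous_const.dist continuous_id).sub continuous_const⟩

/-- The horoboundary of `X` (with basepoint `b`): the closure of `h(X)` in `C(X, ℝ)`
minus `h(X)`. -/
def horoboundary (b : X) : Set C(X, ℝ) :=
  closure (Set.range (horo b)) \ Set.range (horo b)

/-- The setoid on `D_b × M` identifying all points whose second coordinate is `0`. -/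
def collapseSetoid (X : Type*) [MetricSpace X] (b : X) (M : Type*) [Zero M] :
    Setoid (GeodesicRay X b × M) where
  r p q := p = q ∨ (p.2 = 0 ∧ q.2 = 0)
  iseqv := by
    refine ⟨fun _ => Or.inl rfl, ?_, ?_⟩
    · rintro p q (rfl | ⟨h1, h2⟩)
      · exact Or.inl rfl
      · exact Or.inr ⟨h2, h1⟩
    · rintro p q r (rfl | ⟨h1, h2⟩) (rfl | ⟨h3, h4⟩)
      · exact Or.inl rfl
      · exact Or.inr ⟨h3, h4⟩
      · exact Or.inr ⟨h1, h2⟩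
      · exact Or.inr ⟨h1, h4⟩

/-- The visual compactification `X̄_b = (D_b × [0, ∞]) / (D_b × {0})`. -/
abbrev VisualCompactification (X : Type*) [MetricSpace X] (b : X) :=
  Quotient (collapseSetoid X b ℝ≥0∞)

/-- `X` is C¹ along geodesics: for a bi-infinite geodesic `γ` and a point `p` off `γ`,
`t ↦ d(γ t, p)` is differentiable, and the derivative depends continuously on `(t, p)`. -/
def C1AlongGeodesics (X : Type*) [MetricSpace X] : Prop :=
  ∀ γ : ℝ → X, Isometry γ →
    (∀ p, p ∉ Set.range γ → ∀ t : ℝ, DifferentiableAt ℝ (fun s => dist (γ s) p) t) ∧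
      ContinuousOn (fun q : ℝ × X => deriv (fun s => dist (γ s) q.2) q.1)
        {q : ℝ × X | q.2 ∉ Set.range γ}

/-- `X` has constant distance variation: for distinct bi-infinite geodesics `γ, η` with
`γ 0 = η 0`, either `(d/dt) d(γ t, η s)|_{t=0}` exists for all `s > 0` and is independent
of `s`, or it exists for no `s > 0`. -/
def ConstantDistanceVariation (X : Type*) [MetricSpace X] : Prop :=
  ∀ γ η : ℝ → X, Isometry γ → Isometry η → γ 0 = η 0 → γ ≠ η →
    ((∀ s : ℝ, 0 < s → DifferentiableAt ℝ (fun t => dist (γ t) (η s)) 0) ∧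
        ∀ s s' : ℝ, 0 < s → 0 < s' →
          deriv (fun t => dist (γ t) (η s)) 0 = deriv (fun t => dist (γ t) (η s')) 0) ∨
      ∀ s : ℝ, 0 < s → ¬ DifferentiableAt ℝ (fun t => dist (γ t) (η s)) 0

/-!
Rays based at `b` are isometries `ℝ≥0 → X` sending `0` to `b`; in a proper space they form a closed,
equicontinuous and pointwise bounded family, so `D_b` is compact by Arzelà–Ascoli, and the
evaluation at `1` is a continuous map from it to the Hausdorff space `S_b^1`. It is therefore a
homeomorphism as soon as it is bijective. A point `x` of the sphere is hit by the straight extension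
of the segment from `b` to `x`. Two rays through `x` both start with that unique segment, and
straightness forces two geodesics that agree on `[0, 1]` to agree on every `[0, T]`.
-/

open Set

section Isometries

variable {α : Type*} [PseudoMetricSpace α]

theorem isClosed_setOf_isometry : IsClosed {f : α → X | Isometry f} := by
  simp only [isometry_iff_dist_eq, ofPred_forall]
  exact isClosed_iInter fun u => isClosed_iInter fun v =>
    isClosed_eq ((continuous_apply u).dist (continuous_apply v)) continuous_const

theorem isCompact_setOf_isometry_apply_eq [ProperSpace X] (a : α) (b : X) :
    IsCompact {f : α → X | Isometry f ∧ f a = b} := by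
  refine .of_isClosed_subset (isCompact_univ_pi fun t => isCompact_closedBall b (dist t a))
    (isClosed_setOf_isometry.inter (isClosed_eq (continuous_apply a) continuous_const)) ?_
  rintro f ⟨hf, rfl⟩ t -
  exact (hf.dist_eq t a).le

theorem isCompact_setOf_isometry_continuousMap [ProperSpace X] (a : α) (b : X) :
    IsCompact {γ : C(α, X) | Isometry γ ∧ γ a = b} := by
  refine ArzelaAscoli.isCompact_of_equicontinuous _ ?_ ?_
  · convert isCompact_setOf_isometry_apply_eq a b using 1
    ext f
    constructor
    · rintro ⟨γ, hγ, rfl⟩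
      exact hγ
    · rintro ⟨hf, hfa⟩
      exact ⟨⟨f, hf.continuous⟩, ⟨hf, hfa⟩, rfl⟩
  · exact (Metric.uniformEquicontinuous_of_continuity_modulus id tendsto_id _
      fun u v γ => (γ.2.1.dist_eq u v).le).equicontinuous

end Isometries

section Geodesics

theorem IsGeodesicOn.mono {γ : ℝ → X} {s t : Set ℝ} (h : IsGeodesicOn γ s) (hts : t ⊆ s) :
    IsGeodesicOn γ t :=
  fun u hu v hv => h u (hts hu) v (hts hv)

theorem UniquelyGeodesic.eqOn (hU : UniquelyGeodesic X) {a c : X} (hac : a ≠ c) {γ η : ℝ → X}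
    (hγ : IsGeodesicOn γ (Icc 0 (dist a c)) ∧ γ 0 = a ∧ γ (dist a c) = c)
    (hη : IsGeodesicOn η (Icc 0 (dist a c)) ∧ η 0 = a ∧ η (dist a c) = c) :
    EqOn γ η (Icc 0 (dist a c)) := by
  obtain ⟨δ, -, huniq⟩ := hU a c hac
  exact fun t ht => (huniq γ hγ ht).trans (huniq η hη ht).symm

theorem Straight.eqOn_of_eqOn_Icc (hS : Straight X) {a c c' : ℝ} (hac : a < c) (hcc' : c ≤ c')
    {γ η : ℝ → X} (hγ : IsGeodesicOn γ (Icc a c')) (hη : IsGeodesicOn η (Icc a c'))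
    (h : EqOn γ η (Icc a c)) : EqOn γ η (Icc a c') := by
  have hsub : Icc a c ⊆ Icc a c' := Icc_subset_Icc le_rfl hcc'
  obtain ⟨g, ⟨hg, hgγ⟩, -⟩ := hS γ a c' (hac.trans_le hcc') hγ
  obtain ⟨e, ⟨he, heη⟩, -⟩ := hS η a c' (hac.trans_le hcc') hη
  obtain ⟨f, -, huniq⟩ := hS γ a c hac (hγ.mono hsub)
  have hge : g = e :=
    (huniq g ⟨hg, hgγ.mono hsub⟩).trans
      (huniq e ⟨he, fun t ht => (heη (hsub ht)).trans (h ht).symm⟩).symm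
  intro t ht
  rw [← hgγ ht, ← heη ht, hge]

end Geodesics

namespace GeodesicRay

variable {b : X}

noncomputable def extend (γ : GeodesicRay X b) : ℝ → X :=
  fun t => γ.1 t.toNNReal

@[simp]
theorem extend_coe (γ : GeodesicRay X b) (t : NNReal) : γ.extend t = γ.1 t := by
  simp [extend]

@[simp]
theorem extend_zero (γ : GeodesicRay X b) : γ.extend 0 = b := by
  simp [extend, γ.2.2]

theorem isGeodesicOn_extend (γ : GeodesicRay X b) : IsGeodesicOn γ.extend (Ici 0) := by
  intro u hu v hv
  rw [extend, extend, γ.2.1.dist_eq, NNReal.dist_eq, Real.coe_toNNReal _ hu,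
    Real.coe_toNNReal _ hv]

theorem dist_apply_one (γ : GeodesicRay X b) : dist (γ.1 1) b = 1 := by
  simpa [γ.2.2, NNReal.dist_eq] using γ.2.1.dist_eq 1 0

def ofIsometry (g : ℝ → X) (hg : Isometry g) (hg0 : g 0 = b) : GeodesicRay X b :=
  ⟨⟨fun t => g t, hg.continuous.comp NNReal.continuous_coe⟩,
    Isometry.of_dist_eq fun u v => by simp [hg.dist_eq, NNReal.dist_eq, Real.dist_eq], by simpa⟩

theorem ext_of_eqOn (hS : Straight X) {γ η : GeodesicRay X b}
    (h : EqOn γ.extend η.extend (Icc 0 1)) : γ = η := by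
  refine Subtype.ext <| ContinuousMap.ext fun t => ?_
  have hext := hS.eqOn_of_eqOn_Icc one_pos (le_max_left 1 (t : ℝ))
    (γ.isGeodesicOn_extend.mono Icc_subset_Ici_self)
    (η.isGeodesicOn_extend.mono Icc_subset_Ici_self) h
  simpa using hext ⟨t.2, le_max_right _ _⟩

theorem injective_eval_one (hU : UniquelyGeodesic X) (hS : Straight X) :
    Function.Injective fun γ : GeodesicRay X b => γ.1 1 := by
  intro γ η hγη
  have hd : dist b (γ.1 1) = 1 := by rw [dist_comm, γ.dist_apply_one]
  have hb : b ≠ γ.1 1 := by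
    rintro hb
    rw [← hb, dist_self] at hd
    exact zero_ne_one hd
  have hseg (ζ : GeodesicRay X b) (hζ : ζ.1 1 = γ.1 1) :
      IsGeodesicOn ζ.extend (Icc 0 (dist b (γ.1 1))) ∧ ζ.extend 0 = b ∧
        ζ.extend (dist b (γ.1 1)) = γ.1 1 := by
    refine ⟨ζ.isGeodesicOn_extend.mono Icc_subset_Ici_self, ζ.extend_zero, ?_⟩
    simp [extend, hd, hζ]
  have := hU.eqOn hb (hseg γ rfl) (hseg η hγη.symm)
  rw [hd] at this
  exact ext_of_eqOn hS this

theorem exists_eval_one_eq (hU : UniquelyGeodesic X) (hS : Straight X) {x : X}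
    (hx : dist x b = 1) : ∃ γ : GeodesicRay X b, γ.1 1 = x := by
  have hd : dist b x = 1 := by rwa [dist_comm]
  obtain ⟨δ, ⟨hδ, hδ0, hδ1⟩, -⟩ := hU b x (ne_of_apply_ne (dist b) (by simp [hd]))
  rw [hd] at hδ hδ1
  obtain ⟨g, ⟨hg, hgδ⟩, -⟩ := hS δ 0 1 one_pos hδ
  refine ⟨ofIsometry g hg ?_, ?_⟩
  · rw [hgδ (left_mem_Icc.2 zero_le_one), hδ0]
  · simp [ofIsometry, hgδ (right_mem_Icc.2 zero_le_one), hδ1]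

theorem compactSpace [ProperSpace X] (b : X) : CompactSpace (GeodesicRay X b) :=
  isCompact_iff_compactSpace.mp (isCompact_setOf_isometry_continuousMap 0 b)

end GeodesicRay

/-- In a proper, uniquely geodesic, straight metric space, the evaluation map
`D_b → S_b^1`, `γ ↦ γ 1`, is a homeomorphism onto the unit sphere about `b`. -/
theorem statement0 [ProperSpace X] (hU : UniquelyGeodesic X) (hS : Straight X) (b : X) :
    ∃ e : GeodesicRay X b ≃ₜ {x : X // dist x b = 1},
      ∀ γ : GeodesicRay X b, (e γ : X) = γ.1 1 := by
  have := GeodesicRay.compactSpace b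
  let ev : GeodesicRay X b → {x : X // dist x b = 1} := fun γ => ⟨γ.1 1, γ.dist_apply_one⟩
  have hev : Function.Bijective ev :=
    ⟨fun γ η h => GeodesicRay.injective_eval_one hU hS (congrArg Subtype.val h),
      fun x => (GeodesicRay.exists_eval_one_eq hU hS x.2).imp fun _ hγ => Subtype.ext hγ⟩
  have hcont : Continuous ev :=
    ((continuous_eval_const 1).comp continuous_subtype_val).subtype_mk _
  exact ⟨hcont.homeoOfEquivCompactToT2 (f := Equiv.ofBijective ev hev), fun _ => rfl⟩
end

section
/- Let (X, d) be a proper, uniquely geodesic, straight metric space with basepoint b. If γ and γ' are geodesic rays based at b with γ ≠ γ' (as maps [0,∞) → X), then their Busemann points are distinct: there exists p ∈ X with B_γ(p) ≠ B_{γ'}(p). -/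
open Filter Topology
open scoped NNReal ENNReal

variable {X : Type*} [MetricSpace X]

/-! Extend both rays to bi-infinite geodesics `G`, `G'`. A point `p = G r` with `r ≤ 0` lies
behind `γ`, so `B_γ(p) = -r = d(b, p)`. If `B_γ' = B_γ`, the nonincreasing function
`t ↦ d(γ' t, p) - t`, bounded above by `d(b, p)`, tends to `d(b, p)` and is therefore constant:
`d(G r, G' r') = r' - r` for all `r ≤ 0 ≤ r'`. Hence gluing the negative half of `G` to the
positive half of `G'` gives a bi-infinite geodesic, which by straightness coincides with both. -/

lemma Isometry.isGeodesicOn {f : ℝ → X} (hf : Isometry f) (s : Set ℝ) : IsGeodesicOn f s :=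
  fun u _ v _ => by rw [hf.dist_eq, Real.dist_eq]

namespace Straight

lemma eq_of_eqOn_Icc (hS : Straight X) {f g : ℝ → X} (hf : Isometry f) (hg : Isometry g)
    {a c : ℝ} (hac : a < c) (hfg : Set.EqOn f g (Set.Icc a c)) : f = g :=
  (hS g a c hac (hg.isGeodesicOn _)).unique ⟨hf, hfg⟩ ⟨hg, fun _ _ => rfl⟩

lemma exists_isometry_extend_ray (hS : Straight X) {γ : ℝ≥0 → X} (hγ : Isometry γ) :
    ∃ G : ℝ → X, Isometry G ∧ ∀ t : ℝ≥0, G t = γ t := by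
  set g : ℝ → X := fun t => γ t.toNNReal
  have hg : ∀ c, IsGeodesicOn g (Set.Icc 0 c) := fun c u hu v hv => by
    simp only [g, hγ.dist_eq, NNReal.dist_eq, Real.coe_toNNReal _ hu.1, Real.coe_toNNReal _ hv.1]
  obtain ⟨G, ⟨hG, hGg⟩, -⟩ := hS g 0 1 one_pos (hg 1)
  refine ⟨G, hG, fun t => ?_⟩
  obtain ⟨E, ⟨hE, hEg⟩, -⟩ := hS g 0 (max t 1) (by positivity) (hg _)
  have hEG : E = G := hS.eq_of_eqOn_Icc hE hG one_pos fun r hr =>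
    (hEg ⟨hr.1, hr.2.trans (le_max_right _ _)⟩).trans (hGg hr).symm
  rw [← hEG, hEg ⟨t.coe_nonneg, le_max_left _ _⟩]
  simp only [g, Real.toNNReal_coe]

lemma eq_of_dist_eq_sub (hS : Straight X) {G G' : ℝ → X} (hG : Isometry G) (hG' : Isometry G')
    (h : ∀ r ≤ 0, ∀ r', 0 ≤ r' → dist (G r) (G' r') = r' - r) : G = G' := by
  have h0 : G 0 = G' 0 := dist_eq_zero.1 (by simpa using h 0 le_rfl 0 le_rfl)
  set η : ℝ → X := fun r => if r ≤ 0 then G r else G' r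
  have hη : Isometry η := Isometry.of_dist_eq fun x y => by
    wlog hxy : x ≤ y generalizing x y
    · rw [dist_comm, this y x (le_of_not_ge hxy), dist_comm]
    simp only [η]
    by_cases hy : y ≤ 0
    · rw [if_pos (hxy.trans hy), if_pos hy, hG.dist_eq]
    by_cases hx : x ≤ 0
    · rw [if_pos hx, if_neg hy, h x hx y (le_of_not_ge hy), Real.dist_eq,
        abs_of_nonpos (by linarith)]
      ring
    · rw [if_neg hx, if_neg hy, hG'.dist_eq]
  have hηG : η = G := hS.eq_of_eqOn_Icc hη hG neg_one_lt_zero fun r hr => if_pos hr.2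
  have hηG' : η = G' := hS.eq_of_eqOn_Icc hη hG' one_pos fun r hr => by
    rcases hr.1.eq_or_lt with rfl | hr0
    · exact (if_pos le_rfl).trans h0
    · exact if_neg (not_le.2 hr0)
  exact hηG.symm.trans hηG'

end Straight

lemma Isometry.busemann_eq_neg {G : ℝ → X} (hG : Isometry G) {r B : ℝ} (hr : r ≤ 0)
    (hB : Tendsto (fun t : ℝ≥0 => dist (G t) (G r) - t) atTop (𝓝 B)) : B = -r := by
  have hconst : (fun t : ℝ≥0 => dist (G t) (G r) - t) = fun _ => -r := funext fun t => by
    rw [hG.dist_eq, Real.dist_eq, abs_of_nonneg (by linarith [t.coe_nonneg])]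
    ring
  rw [hconst] at hB
  exact tendsto_nhds_unique hB tendsto_const_nhds

lemma Isometry.dist_eq_add_of_le_busemann {γ : ℝ≥0 → X} (hγ : Isometry γ) {p : X} {B : ℝ}
    (hB : Tendsto (fun t : ℝ≥0 => dist (γ t) p - t) atTop (𝓝 B)) (hle : dist (γ 0) p ≤ B)
    (t : ℝ≥0) : dist (γ t) p = t + dist (γ 0) p := by
  have hanti : Antitone fun t : ℝ≥0 => dist (γ t) p - t := fun s t hst => by
    have := dist_triangle (γ t) (γ s) p
    rw [hγ.dist_eq, NNReal.dist_eq, abs_of_nonneg (sub_nonneg.2 (NNReal.coe_le_coe.2 hst))] at this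
    linarith
  have hlower : B ≤ dist (γ t) p - t := hanti.le_of_tendsto hB t
  have hupper : dist (γ t) p ≤ dist (γ t) (γ 0) + dist (γ 0) p := dist_triangle _ _ _
  rw [hγ.dist_eq, NNReal.dist_eq, NNReal.coe_zero, sub_zero, abs_of_nonneg t.coe_nonneg] at hupper
  linarith

theorem statement3_general (hS : Straight X) (b : X)
    (γ γ' : GeodesicRay X b) (hne : ⇑γ.1 ≠ ⇑γ'.1)
    (Bγ Bγ' : X → ℝ)
    (hB : ∀ p : X, Tendsto (fun t : ℝ≥0 => dist (γ.1 t) p - (t : ℝ)) atTop (𝓝 (Bγ p)))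
    (hB' : ∀ p : X, Tendsto (fun t : ℝ≥0 => dist (γ'.1 t) p - (t : ℝ)) atTop (𝓝 (Bγ' p))) :
    ∃ p : X, Bγ p ≠ Bγ' p := by
  by_contra! hBB'
  obtain ⟨G, hG, hGγ⟩ := hS.exists_isometry_extend_ray γ.2.1
  obtain ⟨G', hG', hGγ'⟩ := hS.exists_isometry_extend_ray γ'.2.1
  have hG0 : G 0 = γ'.1 0 := by
    simpa only [NNReal.coe_zero, γ.2.2, γ'.2.2] using hGγ 0
  have hdist : ∀ r ≤ 0, ∀ r', 0 ≤ r' → dist (G r) (G' r') = r' - r := by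
    intro r hr r' hr'
    have hBr : Bγ (G r) = -r := hG.busemann_eq_neg hr (by simpa only [← hGγ] using hB (G r))
    have hbr : dist (γ'.1 0) (G r) = -r := by
      rw [← hG0, hG.dist_eq, Real.dist_eq, zero_sub, abs_neg, abs_of_nonpos hr]
    have hray := γ'.2.1.dist_eq_add_of_le_busemann (hB' (G r)) (by rw [hbr, ← hBB', hBr])
      r'.toNNReal
    rw [hbr, ← hGγ', dist_comm, Real.coe_toNNReal _ hr'] at hray
    linear_combination hray
  exact hne (funext fun t => by rw [← hGγ, ← hGγ', hS.eq_of_dist_eq_sub hG hG' hdist])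

/-- Distinct geodesic rays based at `b` have distinct Busemann points. -/
theorem statement3 [ProperSpace X] (hU : UniquelyGeodesic X) (hS : Straight X) (b : X)
    (γ γ' : GeodesicRay X b) (hne : ⇑γ.1 ≠ ⇑γ'.1)
    (Bγ Bγ' : X → ℝ)
    (hB : ∀ p : X, Tendsto (fun t : ℝ≥0 => dist (γ.1 t) p - (t : ℝ)) atTop (𝓝 (Bγ p)))
    (hB' : ∀ p : X, Tendsto (fun t : ℝ≥0 => dist (γ'.1 t) p - (t : ℝ)) atTop (𝓝 (Bγ' p))) :
    ∃ p : X, Bγ p ≠ Bγ' p :=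
  statement3_general hS b γ γ' hne Bγ Bγ' hB hB'
end

section
/- Let (X, d) be a proper, uniquely geodesic, straight metric space with basepoint b and let ξ lie in the horoboundary of X. Suppose (γ_n) is a sequence of geodesic rays based at b converging in D_b (uniformly on compact sets) to a geodesic ray γ, and (t_n) is a sequence in [0,∞) such that h(γ_n(t_n)) converges to ξ in C(X, ℝ). Then ξ(γ(t)) = −t for every t ≥ 0. -/
open Filter Topology
open scoped NNReal ENNReal

variable {X : Type*} [MetricSpace X]

/-! Along `γₙ` the horofunction based at `γₙ(tₙ)` takes the value `-t` at `γₙ(t)` as soon as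
`tₙ ≥ t`. Since `ξ` is not of the form `h(x)` and closed balls are compact, `h(γₙ(tₙ))` can only
converge to `ξ` if `tₙ = d(γₙ(tₙ), b) → ∞`; and since `X` is locally compact, evaluation
`C(X, ℝ) × X → ℝ` is jointly continuous, so `ξ(γ(t)) = lim h(γₙ(tₙ))(γₙ(t)) = -t`. -/

@[simp]
lemma horo_apply (b x y : X) : horo b x y = dist x y - dist x b := rfl

lemma continuous_horo (b : X) : Continuous (horo b) :=
  (ContinuousMap.curry ⟨fun p : X × X => dist p.1 p.2 - dist p.1 b, by fun_prop⟩).continuous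

lemma tendsto_dist_atTop_of_tendsto_horo [ProperSpace X] {ι : Type*} {l : Filter ι} {b : X}
    {x : ι → X} {ξ : C(X, ℝ)} (hξ : ξ ∉ Set.range (horo b))
    (h : Tendsto (fun i => horo b (x i)) l (𝓝 ξ)) :
    Tendsto (fun i => dist (x i) b) l atTop := by
  refine tendsto_atTop.2 fun C => ?_
  have hclosed : IsClosed (horo b '' Metric.closedBall b C) :=
    ((isCompact_closedBall b C).image (continuous_horo b)).isClosed
  have hξC : ξ ∉ horo b '' Metric.closedBall b C := fun ⟨y, _, hy⟩ => hξ ⟨y, hy⟩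
  filter_upwards [h.eventually (hclosed.isOpen_compl.mem_nhds hξC)] with i hi
  exact (not_le.1 fun hle => hi ⟨x i, Metric.mem_closedBall.2 hle, rfl⟩).le

section Isometry

variable {γ : ℝ≥0 → X}

lemma Isometry.dist_apply_nnreal (hγ : Isometry γ) (s t : ℝ≥0) :
    dist (γ s) (γ t) = |(s : ℝ) - t| := by
  rw [hγ.dist_eq, NNReal.dist_eq]

lemma Isometry.dist_apply_base_nnreal (hγ : Isometry γ) {b : X} (h0 : γ 0 = b) (s : ℝ≥0) :
    dist (γ s) b = s := by
  simp [← h0, hγ.dist_apply_nnreal]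

lemma Isometry.horo_apply_of_le (hγ : Isometry γ) {b : X} (h0 : γ 0 = b) {s r : ℝ≥0}
    (hsr : s ≤ r) : horo b (γ r) (γ s) = -(s : ℝ) := by
  rw [horo_apply, hγ.dist_apply_base_nnreal h0, hγ.dist_apply_nnreal,
    abs_of_nonneg (sub_nonneg.2 (NNReal.coe_le_coe.2 hsr))]
  ring

end Isometry

theorem statement4_general [ProperSpace X] (b : X)
    (ξ : C(X, ℝ)) (hξ : ξ ∈ horoboundary b)
    (γn : ℕ → GeodesicRay X b) (γ : GeodesicRay X b)
    (hconv : Tendsto γn atTop (𝓝 γ))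
    (tn : ℕ → ℝ≥0)
    (hlim : Tendsto (fun n => horo b ((γn n).1 (tn n))) atTop (𝓝 ξ)) :
    ∀ t : ℝ≥0, ξ (γ.1 t) = -(t : ℝ) := by
  intro t
  have htn : Tendsto (fun n => (tn n : ℝ)) atTop atTop :=
    (tendsto_dist_atTop_of_tendsto_horo hξ.2 hlim).congr fun n =>
      (γn n).2.1.dist_apply_base_nnreal (γn n).2.2 (tn n)
  have hγnt : Tendsto (fun n => (γn n).1 t) atTop (𝓝 (γ.1 t)) :=
    ((continuous_subtype_val.tendsto γ).comp hconv).eval tendsto_const_nhds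
  refine tendsto_nhds_unique (hlim.eval hγnt) (tendsto_const_nhds.congr' ?_)
  filter_upwards [htn.eventually_ge_atTop t] with n hn
  exact ((γn n).2.1.horo_apply_of_le (γn n).2.2 (NNReal.coe_le_coe.1 hn)).symm

/-- If `ξ` is a horofunction, `γ_n → γ` in `D_b`, and `h (γ_n (t_n)) → ξ` in
`C(X, ℝ)`, then `ξ (γ t) = -t` for every `t ≥ 0`. -/
theorem statement4 [ProperSpace X] (hU : UniquelyGeodesic X) (hS : Straight X) (b : X)
    (ξ : C(X, ℝ)) (hξ : ξ ∈ horoboundary b)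
    (γn : ℕ → GeodesicRay X b) (γ : GeodesicRay X b)
    (hconv : Tendsto γn atTop (𝓝 γ))
    (tn : ℕ → ℝ≥0)
    (hlim : Tendsto (fun n => horo b ((γn n).1 (tn n))) atTop (𝓝 ξ)) :
    ∀ t : ℝ≥0, ξ (γ.1 t) = -(t : ℝ) :=
  statement4_general b ξ hξ γn γ hconv tn hlim
end

section
/- Let (X, d) be a proper, uniquely geodesic, straight metric space with basepoint b, let ξ lie in the horoboundary, and let (x_n) be a sequence in X with h(x_n) → ξ in C(X, ℝ), where x_n = γ_n(t_n) for geodesic rays γ_n based at b and t_n ∈ [0,∞). Then for every p ∈ X, ξ(p) ≥ liminf_{n→∞} B_{γ_n}(p). -/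
/-!
For a ray `γ` based at `b`, the triangle inequality makes `t ↦ d(γ t, p) - t` nonincreasing,
so the Busemann value `B_γ(p)` is at most `d(γ t, p) - t = h(γ t)(p)` for every `t`, and it is
at least `-d(b, p)`. Hence `B_{γ_n}(p) ≤ h(x_n)(p)` termwise, and taking `liminf` against
`h(x_n)(p) → ξ(p)` gives the claim.
-/

open Filter Topology
open scoped NNReal ENNReal

variable {X : Type*} [MetricSpace X]

-- Without the lower bound `c`, `liminf u l` could be the junk value of an unbounded `sInf`.
theorem Filter.liminf_le_of_le_of_tendsto {α ι : Type*} [ConditionallyCompleteLinearOrder α]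
    [TopologicalSpace α] [OrderTopology α] {l : Filter ι} [l.NeBot] {u v : ι → α} {c L : α}
    (hc : ∀ i, c ≤ u i) (huv : ∀ i, u i ≤ v i) (hv : Tendsto v l (𝓝 L)) : liminf u l ≤ L :=
  calc liminf u l ≤ liminf v l :=
        liminf_le_liminf (.of_forall huv) (isBoundedUnder_of ⟨c, hc⟩)
          hv.isBoundedUnder_le.isCoboundedUnder_ge
    _ = L := hv.liminf_eq

namespace Isometry

variable {Y : Type*} [PseudoMetricSpace Y] {γ : ℝ≥0 → Y}

theorem dist_apply_zero (hγ : Isometry γ) (t : ℝ≥0) : dist (γ t) (γ 0) = t := by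
  rw [hγ.dist_eq, NNReal.dist_eq, NNReal.coe_zero, sub_zero, NNReal.abs_eq]

theorem dist_sub_le_of_le (hγ : Isometry γ) (p : Y) {s t : ℝ≥0} (hst : s ≤ t) :
    dist (γ t) p - t ≤ dist (γ s) p - s := by
  have hts : dist (γ t) (γ s) = t - s := by
    rw [hγ.dist_eq, NNReal.dist_eq, abs_of_nonneg (sub_nonneg.2 (NNReal.coe_le_coe.2 hst))]
  linarith [dist_triangle (γ t) (γ s) p]

theorem neg_dist_le_dist_sub (hγ : Isometry γ) (p : Y) (t : ℝ≥0) :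
    -dist (γ 0) p ≤ dist (γ t) p - t := by
  linarith [dist_triangle (γ t) p (γ 0), dist_comm (γ 0) p, hγ.dist_apply_zero t]

variable {p : Y} {B : ℝ} (hγ : Isometry γ)
  (hB : Tendsto (fun t : ℝ≥0 => dist (γ t) p - t) atTop (𝓝 B))
include hγ hB

theorem busemann_le (s : ℝ≥0) : B ≤ dist (γ s) p - s :=
  le_of_tendsto hB (eventually_atTop.2 ⟨s, fun _ => hγ.dist_sub_le_of_le p⟩)

theorem neg_dist_le_busemann : -dist (γ 0) p ≤ B :=
  ge_of_tendsto hB (.of_forall (hγ.neg_dist_le_dist_sub p))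

end Isometry

theorem horo_apply_geodesicRay {b : X} (γ : GeodesicRay X b) (t : ℝ≥0) (p : X) :
    horo b (γ.1 t) p = dist (γ.1 t) p - t := by
  have hb : dist (γ.1 t) b = t := by simpa only [γ.2.2] using γ.2.1.dist_apply_zero t
  simp only [horo, ContinuousMap.coe_mk, hb]

theorem statement12_general (b : X)
    (ξ : C(X, ℝ))
    (γn : ℕ → GeodesicRay X b) (tn : ℕ → ℝ≥0)
    (hx : Tendsto (fun n => horo b ((γn n).1 (tn n))) atTop (𝓝 ξ))
    (Bγ : ℕ → X → ℝ)
    (hB : ∀ (n : ℕ) (p : X),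
      Tendsto (fun t : ℝ≥0 => dist ((γn n).1 t) p - (t : ℝ)) atTop (𝓝 (Bγ n p))) :
    ∀ p : X, Filter.liminf (fun n => Bγ n p) atTop ≤ ξ p := by
  intro p
  have hlim : Tendsto (fun n => horo b ((γn n).1 (tn n)) p) atTop (𝓝 (ξ p)) :=
    ((continuous_eval_const p).tendsto ξ).comp hx
  refine liminf_le_of_le_of_tendsto (c := -dist b p) (fun n => ?_) (fun n => ?_) hlim
  · simpa only [(γn n).2.2] using (γn n).2.1.neg_dist_le_busemann (hB n p)
  · rw [horo_apply_geodesicRay]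
    exact (γn n).2.1.busemann_le (hB n p) (tn n)

/-- If `ξ` is a horofunction and `h (γ_n (t_n)) → ξ` for rays `γ_n` based at `b`,
then `ξ p ≥ liminf_n B_{γ_n} (p)` for every `p`. -/
theorem statement12 [ProperSpace X] (hU : UniquelyGeodesic X) (hS : Straight X) (b : X)
    (ξ : C(X, ℝ)) (hξ : ξ ∈ horoboundary b)
    (γn : ℕ → GeodesicRay X b) (tn : ℕ → ℝ≥0)
    (hx : Tendsto (fun n => horo b ((γn n).1 (tn n))) atTop (𝓝 ξ))
    (Bγ : ℕ → X → ℝ)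
    (hB : ∀ (n : ℕ) (p : X),
      Tendsto (fun t : ℝ≥0 => dist ((γn n).1 t) p - (t : ℝ)) atTop (𝓝 (Bγ n p))) :
    ∀ p : X, Filter.liminf (fun n => Bγ n p) atTop ≤ ξ p :=
  statement12_general b ξ γn tn hx Bγ hB
end

section
/- Let (X, d) be a proper, uniquely geodesic, straight metric space with basepoint b, let γ be a geodesic ray based at b, and let ξ ∈ Π_b^{-1}(γ), i.e. ξ is in the horoboundary and ξ(γ t) = −t for all t ≥ 0. Then there exists a continuous path α : [0,1] → C(X, ℝ) with α(0) = B_γ, α(1) = ξ, and α(s) ∈ Π_b^{-1}(γ) for every s ∈ [0,1]. -/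
open Filter Topology
open scoped NNReal ENNReal

variable {X : Type*} [MetricSpace X]

/-!
The fiber point `ξ` is a limit of horofunctions `h x` for which `γ T` lies almost on a geodesic
from `x` to `b`, with `T → ∞`. Walking from `x` to `γ T` along a geodesic, the horofunctions
increase, up to the defect `d(x, γ T) + T - d(x, b)`, from `h x ≈ ξ` to `h (γ T) ≈ B_γ`.
Parametrizing these walks by the value of a continuous functional `Φ` that is strictly monotone
on the order interval `[ξ, B_γ]`, and passing to limits along an ultrafilter, gives a monotone
family `Θ g` in the fiber with `Φ (Θ g) = max 0 (min g (Φ B_γ))`. Strict monotonicity of `Φ`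
turns this into continuity of `g ↦ Θ g`, and forces `Θ 0 = ξ` and `Θ (Φ B_γ) = B_γ`.
-/

/-- The horofunction compactification of `X`. -/
def horoClosure (b : X) : Set C(X, ℝ) :=
  closure (Set.range (horo b))

def lipschitzOneVanishingAt (b : X) : Set C(X, ℝ) :=
  {f | LipschitzWith 1 f ∧ f b = 0}

lemma horo_mem_lipschitzOneVanishingAt (b x : X) : horo b x ∈ lipschitzOneVanishingAt b :=
  ⟨LipschitzWith.of_le_add fun p q => by
    simp only [horo_apply]
    linarith [dist_triangle x q p, dist_comm p q], sub_self _⟩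

lemma abs_le_dist_of_lipschitzWith {b : X} {f : X → ℝ} (hf : LipschitzWith 1 f) (hb : f b = 0)
    (y : X) : |f y| ≤ dist y b := by
  simpa [hb, Real.dist_eq] using hf.dist_le_mul y b

lemma neg_dist_le_of_mem_lipschitzOneVanishingAt {b : X} {f : C(X, ℝ)}
    (hf : f ∈ lipschitzOneVanishingAt b) (y : X) : -dist y b ≤ f y :=
  neg_le_of_abs_le (abs_le_dist_of_lipschitzWith hf.1 hf.2 y)

lemma isClosed_lipschitzOneVanishingAt_coe (b : X) :
    IsClosed {f : X → ℝ | LipschitzWith 1 f ∧ f b = 0} :=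
  (isClosed_setOfPred_lipschitzWith 1).inter (isClosed_eq (continuous_apply b) continuous_const)

/-- Arzelà–Ascoli: pointwise bounded by `dist · b` and equicontinuous. -/
lemma isCompact_lipschitzOneVanishingAt (b : X) : IsCompact (lipschitzOneVanishingAt b) := by
  refine ArzelaAscoli.isCompact_of_equicontinuous _ ?_
    (LipschitzWith.uniformEquicontinuous _ 1 fun f => f.2.1).equicontinuous
  have himage : ContinuousMap.toFun '' lipschitzOneVanishingAt b =
      {f : X → ℝ | LipschitzWith 1 f ∧ f b = 0} := by
    ext f
    exact ⟨by rintro ⟨g, hg, rfl⟩; exact hg, fun hf => ⟨⟨f, hf.1.continuous⟩, hf, rfl⟩⟩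
  rw [himage]
  exact (isCompact_univ_pi fun y => isCompact_Icc (a := -dist y b) (b := dist y b))
    |>.of_isClosed_subset (isClosed_lipschitzOneVanishingAt_coe b) fun f hf y _ =>
      abs_le.mp (abs_le_dist_of_lipschitzWith hf.1 hf.2 y)

lemma horoClosure_subset (b : X) : horoClosure b ⊆ lipschitzOneVanishingAt b :=
  closure_minimal (Set.range_subset_iff.mpr (horo_mem_lipschitzOneVanishingAt b))
    (isCompact_lipschitzOneVanishingAt b).isClosed

lemma isCompact_horoClosure (b : X) : IsCompact (horoClosure b) :=
  (isCompact_lipschitzOneVanishingAt b).of_isClosed_subset isClosed_closure (horoClosure_subset b)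

/-- On `lipschitzOneVanishingAt b` the compact-open topology is the topology of
pointwise convergence: a continuous bijection from a compact space is a homeomorphism. -/
lemma isInducing_coe_lipschitzOneVanishingAt (b : X) :
    Topology.IsInducing fun f : lipschitzOneVanishingAt b => ((f : C(X, ℝ)) : X → ℝ) :=
  haveI := isCompact_iff_compactSpace.mp (isCompact_lipschitzOneVanishingAt b)
  ((continuous_coeFun.comp continuous_subtype_val).isClosedEmbedding
    (DFunLike.coe_injective.comp Subtype.val_injective)).isInducing

lemma tendsto_of_tendsto_apply {ι : Type*} {l : Filter ι} [l.NeBot] {b : X} {F : ι → C(X, ℝ)}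
    {g : C(X, ℝ)} (hF : ∀ i, F i ∈ lipschitzOneVanishingAt b)
    (h : ∀ y, Tendsto (fun i => F i y) l (𝓝 (g y))) : Tendsto F l (𝓝 g) := by
  have hg : g ∈ lipschitzOneVanishingAt b :=
    (isClosed_lipschitzOneVanishingAt_coe b).mem_of_tendsto (tendsto_pi_nhds.mpr h)
      (Eventually.of_forall hF)
  have : Tendsto (fun i => (⟨F i, hF i⟩ : lipschitzOneVanishingAt b)) l (𝓝 ⟨g, hg⟩) :=
    (isInducing_coe_lipschitzOneVanishingAt b).tendsto_nhds_iff.mpr (tendsto_pi_nhds.mpr h)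
  exact continuous_subtype_val.continuousAt.tendsto.comp this

lemma continuous_of_continuous_apply {α : Type*} [TopologicalSpace α] {b : X} {F : α → C(X, ℝ)}
    (hF : ∀ a, F a ∈ lipschitzOneVanishingAt b) (h : ∀ y, Continuous fun a => F a y) :
    Continuous F :=
  continuous_iff_continuousAt.mpr fun _ =>
    tendsto_of_tendsto_apply hF fun y => (h y).continuousAt

lemma le_of_tendsto_of_le_add {ι : Type*} {l : Filter ι} [l.NeBot] {F G : ι → C(X, ℝ)}
    {e : ι → ℝ} {f g : C(X, ℝ)} (hF : Tendsto F l (𝓝 f)) (hG : Tendsto G l (𝓝 g))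
    (he : Tendsto e l (𝓝 0)) (h : ∀ i y, F i y ≤ G i y + e i) : f ≤ g :=
  ContinuousMap.le_def.mpr fun y => by
    simpa using le_of_tendsto_of_tendsto (((continuous_eval_const y).tendsto f).comp hF)
      ((((continuous_eval_const y).tendsto g).comp hG).add he) (Eventually.of_forall (h · y))

def IsOptimal {b : X} (γ : GeodesicRay X b) (f : C(X, ℝ)) : Prop :=
  ∀ t : ℝ≥0, f (γ.1 t) = -(t : ℝ)

namespace GeodesicRay

variable {b : X} (γ : GeodesicRay X b)

lemma dist_apply_apply (s t : ℝ≥0) : dist (γ.1 s) (γ.1 t) = |(s : ℝ) - t| := by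
  rw [γ.2.1.dist_eq, NNReal.dist_eq]

lemma dist_apply_base (t : ℝ≥0) : dist (γ.1 t) b = t := by
  have := γ.dist_apply_apply t 0
  rwa [γ.2.2, NNReal.coe_zero, sub_zero, NNReal.abs_eq] at this

lemma horo_apply_apply_of_le {s t : ℝ≥0} (hst : s ≤ t) : horo b (γ.1 t) (γ.1 s) = -(s : ℝ) := by
  have : (s : ℝ) ≤ t := hst
  rw [horo_apply, dist_apply_apply, dist_apply_base, abs_of_nonneg (by linarith)]
  ring

lemma notMem_range_horo_of_isOptimal {f : C(X, ℝ)} (hf : IsOptimal γ f) :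
    f ∉ Set.range (horo b) := by
  rintro ⟨x, rfl⟩
  have h := hf (Real.toNNReal (dist x b) + 1)
  rw [horo_apply, NNReal.coe_add, Real.coe_toNNReal _ dist_nonneg, NNReal.coe_one] at h
  linarith [dist_nonneg (x := x) (y := γ.1 (Real.toNNReal (dist x b) + 1))]

variable {γ} {Bγ : C(X, ℝ)}
  (hB : ∀ p : X, Tendsto (fun t : ℝ≥0 => dist (γ.1 t) p - (t : ℝ)) atTop (𝓝 (Bγ p)))
include hB

lemma tendsto_horo_busemann : Tendsto (fun t => horo b (γ.1 t)) atTop (𝓝 Bγ) :=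
  tendsto_of_tendsto_apply (fun t => horo_mem_lipschitzOneVanishingAt b _) fun p => by
    simpa only [horo_apply, dist_apply_base] using hB p

lemma busemann_mem_horoClosure : Bγ ∈ horoClosure b :=
  mem_closure_of_tendsto (tendsto_horo_busemann hB) (Eventually.of_forall fun _ => ⟨_, rfl⟩)

lemma isOptimal_busemann : IsOptimal γ Bγ := fun s =>
  tendsto_nhds_unique (hB (γ.1 s)) <| tendsto_const_nhds.congr' <| by
    filter_upwards [eventually_ge_atTop s] with t hst
    rw [← dist_apply_base γ t, ← horo_apply, horo_apply_apply_of_le γ hst]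

lemma le_busemann_of_isOptimal {f : C(X, ℝ)} (hf : LipschitzWith 1 f) (hopt : IsOptimal γ f) :
    f ≤ Bγ := ContinuousMap.le_def.mpr fun y =>
  ge_of_tendsto (hB y) <| Eventually.of_forall fun t => by
    have := hf.le_add_mul y (γ.1 t)
    rw [hopt t, NNReal.coe_one, one_mul, dist_comm] at this
    linarith

lemma isOptimal_of_le_busemann {f : C(X, ℝ)} (hf : f ∈ lipschitzOneVanishingAt b)
    (hfB : f ≤ Bγ) : IsOptimal γ f := fun s => by
  have h1 := neg_dist_le_of_mem_lipschitzOneVanishingAt hf (γ.1 s)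
  have h2 := ContinuousMap.le_def.mp hfB (γ.1 s)
  rw [dist_apply_base] at h1
  rw [isOptimal_busemann hB s] at h2
  linarith

end GeodesicRay

def IsGeodesicSegment (w : ℝ → X) (x y : X) : Prop :=
  IsGeodesicOn w (Set.Icc 0 (dist x y)) ∧ w 0 = x ∧ w (dist x y) = y

lemma UniquelyGeodesic.exists_isGeodesicSegment (hU : UniquelyGeodesic X) (x y : X) :
    ∃ w, IsGeodesicSegment w x y := by
  rcases eq_or_ne x y with rfl | hxy
  · refine ⟨fun _ => x, fun u hu v hv => ?_, rfl, rfl⟩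
    rw [dist_self, Set.Icc_self, Set.mem_singleton_iff] at hu hv
    simp [hu, hv]
  · obtain ⟨w, hw, -⟩ := hU x y hxy
    exact ⟨w, hw⟩

namespace IsGeodesicSegment

variable {w : ℝ → X} {x y : X} (hw : IsGeodesicSegment w x y)
include hw

lemma dist_apply_left {u : ℝ} (hu : u ∈ Set.Icc 0 (dist x y)) : dist (w u) x = u := by
  rw [← hw.2.1, hw.1 u hu 0 ⟨le_rfl, dist_nonneg⟩, sub_zero, abs_of_nonneg hu.1]

lemma dist_apply_right {u : ℝ} (hu : u ∈ Set.Icc 0 (dist x y)) :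
    dist (w u) y = dist x y - u := by
  rw [← hw.2.2, hw.1 u hu _ ⟨dist_nonneg, le_rfl⟩, hw.2.2, abs_of_nonpos (by linarith [hu.2])]
  ring

lemma continuousOn : ContinuousOn w (Set.Icc 0 (dist x y)) :=
  (LipschitzOnWith.of_dist_le_mul (K := 1) fun u hu v hv => by
    rw [hw.1 u hu v hv, NNReal.coe_one, one_mul, Real.dist_eq]).continuousOn

/-- Moving towards `y`, horofunctions increase up to the defect of the triangle inequality
`dist x b ≤ dist x y + dist y b`. -/
lemma horo_le_horo_add {u v : ℝ} (hu : u ∈ Set.Icc 0 (dist x y)) (hv : v ∈ Set.Icc 0 (dist x y))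
    (huv : u ≤ v) (b z : X) :
    horo b (w u) z ≤ horo b (w v) z + (dist x y + dist y b - dist x b) := by
  have h1 := dist_triangle (w u) (w v) z
  have h2 := dist_triangle (w v) y b
  have h3 := dist_triangle x (w u) b
  rw [hw.1 u hu v hv, abs_of_nonpos (by linarith)] at h1
  rw [hw.dist_apply_right hv] at h2
  rw [dist_comm x (w u), hw.dist_apply_left hu] at h3
  simp only [horo_apply]
  linarith

lemma horo_left_le_horo_add {v : ℝ} (hv : v ∈ Set.Icc 0 (dist x y)) (b z : X) :
    horo b x z ≤ horo b (w v) z + (dist x y + dist y b - dist x b) := by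
  simpa only [hw.2.1] using hw.horo_le_horo_add ⟨le_rfl, dist_nonneg⟩ hv hv.1 b z

lemma horo_le_horo_right_add {u : ℝ} (hu : u ∈ Set.Icc 0 (dist x y)) (b z : X) :
    horo b (w u) z ≤ horo b y z + (dist x y + dist y b - dist x b) := by
  simpa only [hw.2.2] using hw.horo_le_horo_add hu ⟨dist_nonneg, le_rfl⟩ hu.2 b z

end IsGeodesicSegment

noncomputable def firstHit (φ : ℝ → ℝ) (D ℓ : ℝ) : ℝ :=
  sInf {v ∈ Set.Icc 0 D | ℓ ≤ φ v}

section FirstHit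

variable {φ : ℝ → ℝ} {D ℓ : ℝ}

lemma firstHit_mem (hD : 0 ≤ D) (hℓ : ℓ ≤ φ D) : firstHit φ D ℓ ∈ Set.Icc 0 D :=
  ⟨le_csInf ⟨D, ⟨hD, le_rfl⟩, hℓ⟩ fun _ hv => hv.1.1,
    csInf_le ⟨0, fun _ hv => hv.1.1⟩ ⟨⟨hD, le_rfl⟩, hℓ⟩⟩

lemma firstHit_mono {ℓ' : ℝ} (hD : 0 ≤ D) (hℓ' : ℓ' ≤ φ D) (h : ℓ ≤ ℓ') :
    firstHit φ D ℓ ≤ firstHit φ D ℓ' :=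
  csInf_le_csInf ⟨0, fun _ hv => hv.1.1⟩ ⟨D, ⟨hD, le_rfl⟩, hℓ'⟩ fun _ hv => ⟨hv.1, h.trans hv.2⟩

lemma apply_firstHit (hφ : ContinuousOn φ (Set.Icc 0 D)) (hD : 0 ≤ D) (hℓ : ℓ ≤ φ D) :
    φ (firstHit φ D ℓ) = max (φ 0) ℓ := by
  have hbdd : BddBelow {v ∈ Set.Icc 0 D | ℓ ≤ φ v} := ⟨0, fun _ hv => hv.1.1⟩
  have hmem := firstHit_mem hD hℓ
  rcases le_total ℓ (φ 0) with h0 | h0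
  · have : firstHit φ D ℓ = 0 := le_antisymm (csInf_le hbdd ⟨⟨le_rfl, hD⟩, h0⟩) hmem.1
    rw [this, max_eq_left h0]
  have hclosed : IsClosed {v ∈ Set.Icc 0 D | ℓ ≤ φ v} :=
    hφ.preimage_isClosed_of_isClosed isClosed_Icc isClosed_Ici
  have hℓu := (hclosed.csInf_mem ⟨D, ⟨hD, le_rfl⟩, hℓ⟩ hbdd).2
  -- the intermediate value theorem on `[0, firstHit]` shows the level is attained exactly
  obtain ⟨v, hv, hφv⟩ := intermediate_value_Icc hmem.1
    (hφ.mono (Set.Icc_subset_Icc le_rfl hmem.2)) ⟨h0, hℓu⟩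
  have : firstHit φ D ℓ ≤ v := csInf_le hbdd ⟨⟨hv.1, hv.2.trans hmem.2⟩, hφv.ge⟩
  rw [max_eq_right h0, ← le_antisymm hv.2 this, hφv]

end FirstHit

/-- The level is truncated at `Ψ (w D)` so that it is always reached on `[0, D]`. -/
noncomputable def levelPoint (Ψ : X → ℝ) (w : ℝ → X) (D ℓ : ℝ) : X :=
  w (firstHit (Ψ ∘ w) D (min ℓ (Ψ (w D))))

namespace IsGeodesicSegment

variable {w : ℝ → X} {x y : X} (hw : IsGeodesicSegment w x y) {Ψ : X → ℝ}
include hw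

lemma apply_levelPoint (hΨ : Continuous Ψ) (ℓ : ℝ) :
    Ψ (levelPoint Ψ w (dist x y) ℓ) = max (Ψ x) (min ℓ (Ψ y)) := by
  have := apply_firstHit (hΨ.comp_continuousOn hw.continuousOn) dist_nonneg
    (min_le_right ℓ (Ψ (w (dist x y))))
  exact this.trans (by rw [Function.comp_apply, hw.2.1, hw.2.2])

lemma horo_levelPoint_le_add {ℓ ℓ' : ℝ} (h : ℓ ≤ ℓ') (b z : X) :
    horo b (levelPoint Ψ w (dist x y) ℓ) z ≤
      horo b (levelPoint Ψ w (dist x y) ℓ') z + (dist x y + dist y b - dist x b) :=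
  hw.horo_le_horo_add (firstHit_mem dist_nonneg (min_le_right _ _))
    (firstHit_mem dist_nonneg (min_le_right _ _))
    (firstHit_mono dist_nonneg (min_le_right _ _) (min_le_min_right _ h)) b z

lemma horo_left_le_add (ℓ : ℝ) (b z : X) :
    horo b x z ≤ horo b (levelPoint Ψ w (dist x y) ℓ) z + (dist x y + dist y b - dist x b) :=
  hw.horo_left_le_horo_add (firstHit_mem dist_nonneg (min_le_right _ _)) b z

lemma horo_levelPoint_le_add_right (ℓ : ℝ) (b z : X) :
    horo b (levelPoint Ψ w (dist x y) ℓ) z ≤ horo b y z + (dist x y + dist y b - dist x b) :=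
  hw.horo_le_horo_right_add (firstHit_mem dist_nonneg (min_le_right _ _)) b z

end IsGeodesicSegment

noncomputable def intervalGaugeWeight (lo hi : C(X, ℝ)) (p : ℕ → X) (i : ℕ) : ℝ :=
  (1 / 2) ^ i / (1 + (hi (p i) - lo (p i)))

noncomputable def intervalGaugeTerm (lo hi : C(X, ℝ)) (p : ℕ → X) (f : C(X, ℝ)) (i : ℕ) : ℝ :=
  intervalGaugeWeight lo hi p i * (max (lo (p i)) (min (f (p i)) (hi (p i))) - lo (p i))

/-- A continuous functional, strictly monotone on the order interval `[lo, hi]`: a weighted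
sum over a (dense) sequence `p` of the values clamped into `[lo, hi]`. -/
noncomputable def intervalGauge (lo hi : C(X, ℝ)) (p : ℕ → X) (f : C(X, ℝ)) : ℝ :=
  ∑' i, intervalGaugeTerm lo hi p f i

section IntervalGauge

variable {lo hi : C(X, ℝ)} {p : ℕ → X}

lemma intervalGaugeWeight_pos (hlh : lo ≤ hi) (i : ℕ) : 0 < intervalGaugeWeight lo hi p i :=
  div_pos (by positivity) (by linarith [ContinuousMap.le_def.mp hlh (p i)])

lemma intervalGaugeTerm_nonneg (hlh : lo ≤ hi) (f : C(X, ℝ)) (i : ℕ) :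
    0 ≤ intervalGaugeTerm lo hi p f i :=
  mul_nonneg (intervalGaugeWeight_pos hlh i).le (sub_nonneg.mpr (le_max_left _ _))

lemma intervalGaugeTerm_le (hlh : lo ≤ hi) (f : C(X, ℝ)) (i : ℕ) :
    intervalGaugeTerm lo hi p f i ≤ (1 / 2) ^ i := by
  have hc : 0 ≤ hi (p i) - lo (p i) := sub_nonneg.mpr (ContinuousMap.le_def.mp hlh (p i))
  have hclamp : max (lo (p i)) (min (f (p i)) (hi (p i))) - lo (p i) ≤ hi (p i) - lo (p i) :=
    sub_le_sub_right (max_le (ContinuousMap.le_def.mp hlh (p i)) (min_le_right _ _)) _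
  calc intervalGaugeTerm lo hi p f i
      ≤ (1 / 2) ^ i * ((hi (p i) - lo (p i)) / (1 + (hi (p i) - lo (p i)))) := by
        rw [intervalGaugeTerm, intervalGaugeWeight, div_mul_eq_mul_div, mul_div_assoc]
        gcongr
    _ ≤ (1 / 2) ^ i * 1 := by
        gcongr
        exact (div_le_one (by linarith)).mpr (by linarith)
    _ = (1 / 2) ^ i := mul_one _

lemma summable_intervalGaugeTerm (hlh : lo ≤ hi) (f : C(X, ℝ)) :
    Summable (intervalGaugeTerm lo hi p f) :=
  summable_geometric_two.of_nonneg_of_le (intervalGaugeTerm_nonneg hlh f)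
    (intervalGaugeTerm_le hlh f)

lemma intervalGaugeTerm_of_mem {f : C(X, ℝ)} (hf : f ∈ Set.Icc lo hi) (i : ℕ) :
    intervalGaugeTerm lo hi p f i = intervalGaugeWeight lo hi p i * (f (p i) - lo (p i)) := by
  rw [intervalGaugeTerm, min_eq_left (ContinuousMap.le_def.mp hf.2 (p i)),
    max_eq_right (ContinuousMap.le_def.mp hf.1 (p i))]

lemma continuous_intervalGauge (hlh : lo ≤ hi) : Continuous (intervalGauge lo hi p) :=
  continuous_tsum (fun i => continuous_const.mul <|
      (continuous_const.max ((continuous_eval_const _).min continuous_const)).sub continuous_const)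
    summable_geometric_two fun i f => by
      rw [Real.norm_of_nonneg (intervalGaugeTerm_nonneg hlh f i)]
      exact intervalGaugeTerm_le hlh f i

lemma intervalGauge_nonneg (hlh : lo ≤ hi) (f : C(X, ℝ)) : 0 ≤ intervalGauge lo hi p f :=
  tsum_nonneg (intervalGaugeTerm_nonneg hlh f)

lemma intervalGauge_lo (hlh : lo ≤ hi) : intervalGauge lo hi p lo = 0 := by
  simp only [intervalGauge, intervalGaugeTerm_of_mem ⟨le_rfl, hlh⟩, sub_self, mul_zero,
    tsum_zero]

lemma weight_mul_sub_le_intervalGauge_sub {f f' : C(X, ℝ)} (hf : f ∈ Set.Icc lo hi)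
    (hf' : f' ∈ Set.Icc lo hi) (hff' : f ≤ f') (j : ℕ) :
    intervalGaugeWeight lo hi p j * (f' (p j) - f (p j)) ≤
      intervalGauge lo hi p f' - intervalGauge lo hi p f := by
  have hlh : lo ≤ hi := hf.1.trans hf.2
  have hterm (i : ℕ) : intervalGaugeTerm lo hi p f' i - intervalGaugeTerm lo hi p f i =
      intervalGaugeWeight lo hi p i * (f' (p i) - f (p i)) := by
    rw [intervalGaugeTerm_of_mem hf, intervalGaugeTerm_of_mem hf']
    ring
  have hf'sum := summable_intervalGaugeTerm (p := p) hlh f'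
  have hfsum := summable_intervalGaugeTerm (p := p) hlh f
  rw [intervalGauge, intervalGauge, ← hf'sum.tsum_sub hfsum, tsum_congr hterm]
  exact ((hf'sum.sub hfsum).congr hterm).le_tsum j fun i _ => mul_nonneg
    (intervalGaugeWeight_pos hlh i).le (sub_nonneg.mpr (ContinuousMap.le_def.mp hff' (p i)))

/-- For `1`-Lipschitz functions in `[lo, hi]`, a small increase of the gauge forces a small
increase at every point: compare at a point `p j` close to it. -/
lemma exists_intervalGauge_sub_lt (hlh : lo ≤ hi) (hp : DenseRange p) (y : X) {ε : ℝ} (hε : 0 < ε) :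
    ∃ δ > 0, ∀ f f' : C(X, ℝ), LipschitzWith 1 f → LipschitzWith 1 f' →
      f ∈ Set.Icc lo hi → f' ∈ Set.Icc lo hi → f ≤ f' →
      intervalGauge lo hi p f' - intervalGauge lo hi p f < δ → f' y - f y < ε := by
  obtain ⟨j, hj⟩ := hp.exists_dist_lt y (half_pos (half_pos hε))
  refine ⟨intervalGaugeWeight lo hi p j * (ε / 2), ?_, ?_⟩
  · exact mul_pos (intervalGaugeWeight_pos hlh j) (half_pos hε)
  intro f f' hfL hf'L hf hf' hff' hgap
  by_contra! hge
  have h1 := hfL.le_add_mul (p j) y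
  have h2 := hf'L.le_add_mul y (p j)
  rw [NNReal.coe_one, one_mul] at h1 h2
  rw [dist_comm] at h1
  have h3 : ε / 2 ≤ f' (p j) - f (p j) := by linarith
  have := weight_mul_sub_le_intervalGauge_sub (p := p) hf hf' hff' j
  linarith [mul_le_mul_of_nonneg_left h3 (intervalGaugeWeight_pos (p := p) hlh j).le]

lemma eq_of_intervalGauge_le (hp : DenseRange p) {f f' : C(X, ℝ)} (hfL : LipschitzWith 1 f)
    (hf'L : LipschitzWith 1 f') (hf : f ∈ Set.Icc lo hi) (hf' : f' ∈ Set.Icc lo hi)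
    (hff' : f ≤ f') (hgauge : intervalGauge lo hi p f' ≤ intervalGauge lo hi p f) : f = f' := by
  refine ContinuousMap.ext fun y => le_antisymm (ContinuousMap.le_def.mp hff' y) ?_
  refine le_of_forall_pos_lt_add fun ε hε => ?_
  obtain ⟨δ, hδ, hgap⟩ := exists_intervalGauge_sub_lt (hf.1.trans hf.2) hp y hε
  linarith [hgap f f' hfL hf'L hf hf' hff' (by linarith)]

lemma continuous_apply_of_continuous_intervalGauge (hlh : lo ≤ hi) (hp : DenseRange p)
    {Θ : ℝ → C(X, ℝ)} (hmono : Monotone Θ) (hL : ∀ g, LipschitzWith 1 (Θ g))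
    (hmem : ∀ g, Θ g ∈ Set.Icc lo hi) (hc : Continuous fun g => intervalGauge lo hi p (Θ g))
    (y : X) : Continuous fun g => Θ g y := by
  rw [Metric.continuous_iff]
  intro g₀ ε hε
  obtain ⟨δ, hδ, hgap⟩ := exists_intervalGauge_sub_lt hlh hp y hε
  obtain ⟨η, hη, hcη⟩ := Metric.continuous_iff.mp hc g₀ δ hδ
  refine ⟨η, hη, fun g hg => ?_⟩
  have hG := abs_sub_lt_iff.mp (Real.dist_eq _ _ ▸ hcη g hg)
  rw [Real.dist_eq, abs_sub_lt_iff]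
  rcases le_total g g₀ with h | h
  · have := hgap _ _ (hL g) (hL g₀) (hmem g) (hmem g₀) (hmono h) (by linarith)
    have := ContinuousMap.le_def.mp (hmono h) y
    constructor <;> linarith
  · have := hgap _ _ (hL g₀) (hL g) (hmem g₀) (hmem g) (hmono h) (by linarith)
    have := ContinuousMap.le_def.mp (hmono h) y
    constructor <;> linarith

end IntervalGauge

lemma GeodesicRay.exists_ultrafilter_tendsto {b : X} (γ : GeodesicRay X b) {ξ : C(X, ℝ)}
    (hξ : ξ ∈ horoClosure b) (hopt : IsOptimal γ ξ) :
    ∃ U : Ultrafilter (ℝ≥0 × X), Tendsto Prod.fst (U : Filter (ℝ≥0 × X)) atTop ∧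
      Tendsto (fun q : ℝ≥0 × X => horo b q.2) U (𝓝 ξ) ∧
      Tendsto (fun q : ℝ≥0 × X => dist q.2 (γ.1 q.1) + dist (γ.1 q.1) b - dist q.2 b) U (𝓝 0) := by
  have hne : (comap (horo b) (𝓝 ξ)).NeBot := comap_neBot_iff.mpr fun t ht =>
    let ⟨_, hft, x, hx⟩ := mem_closure_iff_nhds.mp hξ t ht
    ⟨x, hx ▸ hft⟩
  -- first let the ray parameter go to infinity, then the point approach `ξ`
  let l := (atTop : Filter ℝ≥0).curry (comap (horo b) (𝓝 ξ))
  have : l.NeBot := by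
    rw [← frequently_true_iff_neBot, frequently_curry_iff]
    exact Eventually.frequently <| Eventually.of_forall fun _ =>
      (frequently_true_iff_neBot _).mpr hne
  refine ⟨Ultrafilter.of l, ?_, ?_, ?_⟩ <;> refine Tendsto.mono_left ?_ (Ultrafilter.of_le l)
  · exact tendsto_fst.mono_left curry_le_prod
  · exact (tendsto_comap.comp tendsto_snd).mono_left curry_le_prod
  · refine Tendsto.curry (f := fun (T : ℝ≥0) (x : X) => dist x (γ.1 T) + dist (γ.1 T) b - dist x b)
      (Eventually.of_forall fun T => ?_)
    have := (((continuous_eval_const (γ.1 T)).tendsto ξ).comp (tendsto_comap (f := horo b)))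
      |>.sub_const (ξ (γ.1 T))
    rw [sub_self] at this
    refine this.congr fun x => ?_
    simp only [Function.comp_apply, horo_apply, hopt T, γ.dist_apply_base]
    ring

/-- `Θ g` is a limit of the horofunctions of the points at `Φ`-level `g` on the segments from
`x i` to `y i`; as the triangle inequality `dist x b ≤ dist x y + dist y b` becomes an equality
along `U`, these limits increase with `g`. -/
theorem exists_monotone_interpolation {ι : Type*} {b : X} (w : X → X → ℝ → X)
    (hw : ∀ x y, IsGeodesicSegment (w x y) x y) {Φ : C(X, ℝ) → ℝ} (hΦ : Continuous Φ)
    (U : Ultrafilter ι) {x y : ι → X} {lo hi : C(X, ℝ)}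
    (hx : Tendsto (fun i => horo b (x i)) U (𝓝 lo))
    (hy : Tendsto (fun i => horo b (y i)) U (𝓝 hi))
    (hxy : Tendsto (fun i => dist (x i) (y i) + dist (y i) b - dist (x i) b) U (𝓝 0)) :
    ∃ Θ : ℝ → C(X, ℝ), Monotone Θ ∧ (∀ g, Θ g ∈ horoClosure b) ∧ (∀ g, Θ g ∈ Set.Icc lo hi) ∧
      ∀ g, Φ (Θ g) = max (Φ lo) (min g (Φ hi)) := by
  let z (g : ℝ) (i : ι) : X := levelPoint (Φ ∘ horo b) (w (x i) (y i)) (dist (x i) (y i)) g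
  have hlim (g : ℝ) : ∃ f ∈ horoClosure b, Tendsto (fun i => horo b (z g i)) U (𝓝 f) :=
    (isCompact_horoClosure b).ultrafilter_le_nhds (U.map fun i => horo b (z g i))
      (le_principal_iff.mpr <| mem_map.mpr <| univ_mem' fun i =>
        subset_closure (Set.mem_range_self (z g i)))
  choose Θ hΘ hΘlim using hlim
  refine ⟨Θ, fun g g' hgg' => le_of_tendsto_of_le_add (hΘlim g) (hΘlim g') hxy
      fun i => (hw _ _).horo_levelPoint_le_add hgg' b, hΘ,
    fun g => ⟨le_of_tendsto_of_le_add hx (hΘlim g) hxy fun i => (hw _ _).horo_left_le_add g b,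
      le_of_tendsto_of_le_add (hΘlim g) hy hxy
        fun i => (hw _ _).horo_levelPoint_le_add_right g b⟩, fun g => ?_⟩
  refine tendsto_nhds_unique ((hΦ.tendsto _).comp (hΘlim g)) ?_
  refine (((hΦ.tendsto _).comp hx).max (tendsto_const_nhds.min ((hΦ.tendsto _).comp hy))).congr
    fun i => ((hw _ _).apply_levelPoint (hΦ.comp (continuous_horo b)) g).symm

theorem statement14_general [ProperSpace X] (hU : UniquelyGeodesic X) (b : X)
    (γ : GeodesicRay X b) (ξ : C(X, ℝ))
    (hξ : ξ ∈ horoboundary b) (hopt : ∀ t : ℝ≥0, ξ (γ.1 t) = -(t : ℝ))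
    (Bγ : C(X, ℝ))
    (hB : ∀ p : X, Tendsto (fun t : ℝ≥0 => dist (γ.1 t) p - (t : ℝ)) atTop (𝓝 (Bγ p))) :
    ∃ α : C(unitInterval, C(X, ℝ)), α 0 = Bγ ∧ α 1 = ξ ∧
      ∀ s : unitInterval, α s ∈ horoboundary b ∧ ∀ t : ℝ≥0, (α s) (γ.1 t) = -(t : ℝ) := by
  have : Nonempty X := ⟨b⟩
  choose w hw using hU.exists_isGeodesicSegment
  obtain ⟨U, hUT, hUξ, hUdefect⟩ := γ.exists_ultrafilter_tendsto hξ.1 hopt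
  have hξL := horoClosure_subset b hξ.1
  have hBL := horoClosure_subset b (GeodesicRay.busemann_mem_horoClosure hB)
  have hξB : ξ ≤ Bγ := GeodesicRay.le_busemann_of_isOptimal hB hξL.1 hopt
  have hp := TopologicalSpace.denseRange_denseSeq X
  let Φ := intervalGauge ξ Bγ (TopologicalSpace.denseSeq X)
  obtain ⟨Θ, hmono, hΘcl, hΘmem, hΦΘ⟩ := exists_monotone_interpolation w hw
    (continuous_intervalGauge hξB) U hUξ ((GeodesicRay.tendsto_horo_busemann hB).comp hUT)
    hUdefect
  have hL (g : ℝ) := horoClosure_subset b (hΘcl g)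
  have hΘ0 : Θ 0 = ξ := (eq_of_intervalGauge_le hp hξL.1 (hL 0).1 ⟨le_rfl, hξB⟩ (hΘmem 0)
    (hΘmem 0).1 (by rw [hΦΘ, intervalGauge_lo hξB]; simp)).symm
  have hΘc : Θ (Φ Bγ) = Bγ := eq_of_intervalGauge_le hp (hL _).1 hBL.1 (hΘmem _) ⟨hξB, le_rfl⟩
    (hΘmem _).2 (by rw [hΦΘ, intervalGauge_lo hξB, min_self,
      max_eq_right (intervalGauge_nonneg hξB _)])
  have hcont : Continuous Θ := continuous_of_continuous_apply hL <|
    continuous_apply_of_continuous_intervalGauge hξB hp hmono (fun g => (hL g).1) hΘmem <|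
      (continuous_const.max (continuous_id.min continuous_const)).congr fun g => (hΦΘ g).symm
  refine ⟨⟨fun s => Θ (Φ Bγ * unitInterval.symm s), hcont.comp (continuous_const.mul
    (continuous_subtype_val.comp unitInterval.continuous_symm))⟩, by simp [hΘc], by simp [hΘ0],
    fun s => ?_⟩
  have hopt' :=
    GeodesicRay.isOptimal_of_le_busemann hB (hL _) (hΘmem (Φ Bγ * unitInterval.symm s)).2
  exact ⟨⟨hΘcl _, γ.notMem_range_horo_of_isOptimal hopt'⟩, hopt'⟩

/-- Every point `ξ` of the fiber `Π_b⁻¹ (γ)` is joined to the Busemann point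
`B_γ` by a continuous path contained in the fiber. -/
theorem statement14 [ProperSpace X] (hU : UniquelyGeodesic X) (hS : Straight X) (b : X)
    (γ : GeodesicRay X b) (ξ : C(X, ℝ))
    (hξ : ξ ∈ horoboundary b) (hopt : ∀ t : ℝ≥0, ξ (γ.1 t) = -(t : ℝ))
    (Bγ : C(X, ℝ))
    (hB : ∀ p : X, Tendsto (fun t : ℝ≥0 => dist (γ.1 t) p - (t : ℝ)) atTop (𝓝 (Bγ p))) :
    ∃ α : C(unitInterval, C(X, ℝ)), α 0 = Bγ ∧ α 1 = ξ ∧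
      ∀ s : unitInterval, α s ∈ horoboundary b ∧ ∀ t : ℝ≥0, (α s) (γ.1 t) = -(t : ℝ) :=
  statement14_general hU b γ ξ hξ hopt Bγ hB
end
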